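/- arXiv:math/0502001 — 3 statements merged into one kernel-verified Lean document; each statement's English description precedes it below -/
import Mathlib

section
/- Let U ⊆ ℝ^n be open, let τ be the constant unit pseudoscalar of Euclidean ℝ^n, and define the standard Hodge operator ⋆X = X̃ τ pointwise. Then for every smooth multivector field X on U: ⋆⁻¹(∂_o ∧ (⋆X)) = -∂_o ⌟ X̂, where X̂ is the grade involution applied pointwise. -/
/- STATEMENT 7: For the constant unit pseudoscalar τ of Euclidean ℝⁿ and the standard
Hodge operator ⋆X = X̃ τ (with inverse ⋆⁻¹X = τ X̃), every smooth multivector field X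
on an open U ⊆ ℝⁿ satisfies ⋆⁻¹(∂_o ∧ (⋆X)) = -∂_o ⌟ X̂.  Since τ is constant, the
μ-th partial derivative of ⋆X is ⋆(∂X/∂x_μ) = (∂X/∂x_μ)~ τ. -/

noncomputable section
open CliffordAlgebra

/-- the Euclidean quadratic form `v ↦ ⟪v,v⟫` on `ℝⁿ`. -/
def euclQ (n : ℕ) : QuadraticForm ℝ (EuclideanSpace ℝ (Fin n)) :=
  LinearMap.BilinMap.toQuadraticMap
    (innerₗ (EuclideanSpace ℝ (Fin n)) : LinearMap.BilinForm ℝ (EuclideanSpace ℝ (Fin n)))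

abbrev Mv (n : ℕ) := CliffordAlgebra (euclQ n)

/-- the standard orthonormal basis vectors of `ℝⁿ`. -/
def bv (n : ℕ) (i : Fin n) : EuclideanSpace ℝ (Fin n) := EuclideanSpace.single i 1

/-- the constant unit pseudoscalar `τ = b_1 b_2 ⋯ b_n`. -/
def tau (n : ℕ) : Mv n := (List.ofFn fun i => ι (euclQ n) (bv n i)).prod

/-- exterior product of a vector with a multivector inside the Clifford algebra. -/
def vWedge {n : ℕ} (a : EuclideanSpace ℝ (Fin n)) (x : Mv n) : Mv n :=
  (2⁻¹ : ℝ) • (ι (euclQ n) a * x + involute x * ι (euclQ n) a)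

/-- left contraction of a multivector by a vector inside the Clifford algebra. -/
def vLCont {n : ℕ} (a : EuclideanSpace ℝ (Fin n)) (x : Mv n) : Mv n :=
  (2⁻¹ : ℝ) • (ι (euclQ n) a * x - involute x * ι (euclQ n) a)

/-- `X' x` is the (total) derivative of the multivector field `X` at each `x ∈ U`,
expressed weakly: every scalar component of `X` has derivative the corresponding
component of `X'`. -/
def IsDerivOn {n : ℕ} (U : Set (EuclideanSpace ℝ (Fin n))) (X : EuclideanSpace ℝ (Fin n) → Mv n)
    (X' : EuclideanSpace ℝ (Fin n) → EuclideanSpace ℝ (Fin n) →ₗ[ℝ] Mv n) : Prop :=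
  ∀ ℓ : Mv n →ₗ[ℝ] ℝ, ∀ x ∈ U,
    HasFDerivAt (fun y => ℓ (X y)) (LinearMap.toContinuousLinearMap (ℓ ∘ₗ X' x)) x

namespace HodgeAux

variable {n : ℕ}

/-- the basis Clifford generators. -/
def ee (n : ℕ) (i : Fin n) : Mv n := ι (euclQ n) (bv n i)

lemma euclQ_bv (i : Fin n) : euclQ n (bv n i) = 1 := by
  simp [euclQ, bv, LinearMap.BilinMap.toQuadraticMap_apply, innerₗ_apply_apply,
    EuclideanSpace.inner_single_left, EuclideanSpace.single_apply]

lemma ee_sq (i : Fin n) : ee n i * ee n i = 1 := by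
  rw [ee, ι_sq_scalar, euclQ_bv, map_one]

lemma ee_anticomm {i j : Fin n} (h : i ≠ j) : ee n i * ee n j = -(ee n j * ee n i) := by
  have hp : QuadraticMap.polar (⇑(euclQ n)) (bv n i) (bv n j) = 0 := by
    simp [euclQ, bv, LinearMap.BilinMap.polar_toQuadraticMap, innerₗ_apply_apply,
      EuclideanSpace.inner_single_left, EuclideanSpace.single_apply, h, h.symm]
  have := ι_mul_ι_add_swap (Q := euclQ n) (bv n i) (bv n j)
  rw [hp, map_zero] at this
  exact eq_neg_of_add_eq_zero_left this

lemma prod_mul_rev (l : List (Fin n)) :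
    (l.map (ee n)).prod * (l.reverse.map (ee n)).prod = 1 := by
  induction l with
  | nil => simp
  | cons a t ih =>
    simp only [List.map_cons, List.prod_cons, List.reverse_cons, List.map_append,
      List.prod_append, List.map_nil, List.prod_nil, List.prod_cons, mul_one]
    rw [mul_assoc, ← mul_assoc (List.map (ee n) t).prod, ih, one_mul, ee_sq]

lemma reverse_prod (l : List (Fin n)) :
    reverse (l.map (ee n)).prod = (l.reverse.map (ee n)).prod := by
  induction l with
  | nil => simp
  | cons a t ih =>
    simp only [List.map_cons, List.prod_cons, reverse.map_mul, ih, List.reverse_cons,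
      List.map_append, List.prod_append, List.map_nil, List.prod_cons, List.prod_nil, mul_one]
    rw [ee, reverse_ι]

lemma involute_prod (l : List (Fin n)) :
    involute (l.map (ee n)).prod = ((-1 : ℝ) ^ l.length) • (l.map (ee n)).prod := by
  induction l with
  | nil => simp
  | cons a t ih =>
    have : involute (ee n a) = -(ee n a) := by rw [ee, involute_ι]
    simp only [List.map_cons, List.prod_cons, map_mul, this, ih, List.length_cons]
    simp [pow_succ, mul_smul, neg_smul, smul_neg, mul_smul_comm, neg_mul]

lemma ee_comm_prod (μ : Fin n) (l : List (Fin n)) :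
    ee n μ * (l.map (ee n)).prod
      = ((-1 : ℝ) ^ (l.countP (fun x => decide (x ≠ μ)))) • ((l.map (ee n)).prod * ee n μ) := by
  induction l with
  | nil => simp
  | cons a t ih =>
    rw [List.map_cons, List.prod_cons, List.countP_cons]
    by_cases h : a = μ
    · subst h
      rw [if_neg (by simp), add_zero, mul_assoc, ih, mul_smul_comm]
    · rw [if_pos (by simp [h]), ← mul_assoc, ee_anticomm (fun hh => h hh.symm), neg_mul,
        mul_assoc, ih, pow_succ, mul_smul]
      simp [mul_smul_comm, smul_neg, neg_smul, mul_assoc]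

lemma countP_finRange (μ : Fin n) :
    (List.finRange n).countP (fun x => decide (x ≠ μ)) + 1 = n := by
  have key : ∀ l : List (Fin n),
      l.countP (fun x => decide (x ≠ μ)) + l.count μ = l.length := by
    intro l
    induction l with
    | nil => simp
    | cons a t ih =>
      rw [List.countP_cons, List.count_cons, List.length_cons]
      by_cases h : a = μ
      · subst h
        rw [if_neg (by simp), if_pos (by simp)]
        omega
      · rw [if_pos (decide_eq_true h), if_neg (by simp [h])]
        omega
  have h1 : (List.finRange n).count μ = 1 :=
    List.count_eq_one_of_mem (List.nodup_finRange n) (List.mem_finRange μ)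
  have := key (List.finRange n)
  rw [h1, List.length_finRange] at this
  exact this

lemma tau_eq : tau n = ((List.finRange n).map (ee n)).prod := by
  rw [tau, List.ofFn_eq_map]; rfl

lemma tau_mul_rev : tau n * reverse (tau n) = 1 := by
  rw [tau_eq, reverse_prod]; exact prod_mul_rev _

lemma ee_comm_tau (μ : Fin n) :
    ee n μ * tau n = (-(-1 : ℝ) ^ n) • (tau n * ee n μ) := by
  rw [tau_eq, ee_comm_prod]
  congr 1
  have hc := countP_finRange μ
  have : ((-1 : ℝ) ^ ((List.finRange n).countP (fun x => decide (x ≠ μ)))) * (-1) = (-1) ^ n := by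
    rw [← pow_succ, hc]
  linarith [this]

lemma ee_comm_rev_tau (μ : Fin n) :
    ee n μ * reverse (tau n) = (-(-1 : ℝ) ^ n) • (reverse (tau n) * ee n μ) := by
  have h := congrArg reverse (ee_comm_tau μ)
  rw [reverse.map_mul, map_smul, reverse.map_mul] at h
  have hι : reverse (ee n μ) = ee n μ := by rw [ee, reverse_ι]
  rw [hι] at h
  -- h : reverse (tau n) * ee n μ = (-(-1)^n) • (ee n μ * reverse (tau n))
  have := congrArg (fun z => (-(-1 : ℝ) ^ n) • z) h
  simp only [smul_smul] at this
  have hsq : (-(-1 : ℝ) ^ n) * (-(-1 : ℝ) ^ n) = 1 := by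
    rw [neg_mul_neg, ← pow_add]
    exact Even.neg_one_pow ⟨n, rfl⟩
  rw [hsq, one_smul] at this
  exact this.symm

lemma involute_rev_tau : involute (reverse (tau n)) = ((-1 : ℝ) ^ n) • reverse (tau n) := by
  rw [← reverse_involute, tau_eq, involute_prod, map_smul, List.length_finRange, reverse_prod]

lemma key_term (μ : Fin n) (Y : Mv n) :
    tau n * reverse (vWedge (bv n μ) (reverse Y * tau n))
      = -(vLCont (bv n μ) (involute Y)) := by
  set a : Mv n := ι (euclQ n) (bv n μ) with ha
  have haee : a = ee n μ := rfl
  have K1 : ∀ z : Mv n, tau n * (reverse (tau n) * z) = z := by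
    intro z; rw [← mul_assoc, tau_mul_rev, one_mul]
  have K2 : ∀ z : Mv n, tau n * (a * (reverse (tau n) * z)) = (-(-1 : ℝ) ^ n) • (a * z) := by
    intro z
    rw [← mul_assoc a, haee, ee_comm_rev_tau, smul_mul_assoc, mul_smul_comm, mul_assoc,
      ← haee, K1]
  have e1 : reverse (a * (reverse Y * tau n)) = reverse (tau n) * (Y * a) := by
    rw [reverse.map_mul, reverse.map_mul, reverse_reverse, ha, reverse_ι, mul_assoc]
  have e2 : reverse (involute (reverse Y * tau n) * a)
      = ((-1 : ℝ) ^ n) • (a * (reverse (tau n) * involute Y)) := by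
    rw [reverse.map_mul, ha, reverse_ι, reverse_involute, reverse.map_mul, reverse_reverse,
      map_mul, involute_rev_tau, smul_mul_assoc, mul_smul_comm]
  rw [vWedge, vLCont, map_smul, map_add, ← ha, e1, e2, mul_smul_comm, mul_add, K1,
    mul_smul_comm, K2, involute_involute, smul_smul]
  have hs : ((-1 : ℝ) ^ n) * (-(-1 : ℝ) ^ n) = -1 := by
    rw [mul_neg, ← pow_add, Even.neg_one_pow ⟨n, rfl⟩]
  rw [hs]
  module

end HodgeAux

theorem hodge_duality_identity_standard {n : ℕ}
    (U : Set (EuclideanSpace ℝ (Fin n))) (hU : IsOpen U)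
    (X : EuclideanSpace ℝ (Fin n) → Mv n)
    (X' : EuclideanSpace ℝ (Fin n) → EuclideanSpace ℝ (Fin n) →ₗ[ℝ] Mv n)
    (hX : IsDerivOn U X X')
    (hsmooth : ∀ ℓ : Mv n →ₗ[ℝ] ℝ, ContDiffOn ℝ (⊤ : ℕ∞) (fun y => ℓ (X y)) U) :
    ∀ x ∈ U,
      -- ⋆⁻¹ (∂_o ∧ (⋆X)) = - ∂_o ⌟ X̂ :
      tau n * reverse (∑ μ, vWedge (bv n μ) (reverse (X' x (bv n μ)) * tau n))
        = -∑ μ, vLCont (bv n μ) (involute (X' x (bv n μ))) := by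
  intro x hx
  rw [map_sum, Finset.mul_sum, ← Finset.sum_neg_distrib]
  exact Finset.sum_congr rfl fun μ _ => HodgeAux.key_term μ (X' x (bv n μ))
end
end

section
/- Let U ⊆ ℝ^n be open and define the standard Hodge coderivative δX = ⋆⁻¹(∂_o ∧ (⋆ X̂)) for smooth multivector fields X on U, where ⋆ is the standard Hodge operator of Euclidean ℝ^n. Then δX = -∂_o ⌟ X. -/
/- STATEMENT 8: The standard Hodge coderivative δX = ⋆⁻¹(∂_o ∧ (⋆ X̂)) of a smooth
multivector field X on open U ⊆ ℝⁿ satisfies δX = -∂_o ⌟ X.  Here ⋆X = X̃ τ,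
⋆⁻¹X = τ X̃, and since τ is constant the μ-th partial derivative of ⋆(X̂) is
(∂X/∂x_μ)^(ˆ~) τ. -/

noncomputable section
open CliffordAlgebra

-- inner products of basis vectors
lemma inner_bv (n : ℕ) (i j : Fin n) :
    (inner ℝ (bv n i) (bv n j) : ℝ) = if j = i then 1 else 0 := by
  simp [bv, EuclideanSpace.inner_single_left, EuclideanSpace.single_apply, eq_comm]

lemma ι_bv_sq (n : ℕ) (i : Fin n) :
    ι (euclQ n) (bv n i) * ι (euclQ n) (bv n i) = 1 := by
  rw [ι_sq_scalar]
  have : euclQ n (bv n i) = 1 := by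
    simp only [euclQ, LinearMap.BilinMap.toQuadraticMap_apply, innerₗ_apply_apply]
    simp [bv, EuclideanSpace.single_apply]
  rw [this, map_one]

lemma ι_bv_anticomm (n : ℕ) {i j : Fin n} (h : i ≠ j) :
    ι (euclQ n) (bv n i) * ι (euclQ n) (bv n j)
      = -(ι (euclQ n) (bv n j) * ι (euclQ n) (bv n i)) := by
  refine ι_mul_ι_comm_of_isOrtho ?_
  have hij : (inner ℝ (bv n i) (bv n j) : ℝ) = 0 := by
    rw [inner_bv]; simp [h.symm]
  show euclQ n (bv n i + bv n j) = euclQ n (bv n i) + euclQ n (bv n j)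
  simp only [euclQ, LinearMap.BilinMap.toQuadraticMap_apply, innerₗ_apply_apply]
  rw [show (inner ℝ (bv n i + bv n j) (bv n i + bv n j) : ℝ)
      = inner ℝ (bv n i) (bv n i) + 2 * inner ℝ (bv n i) (bv n j) + inner ℝ (bv n j) (bv n j)
    from real_inner_add_add_self _ _, hij]
  ring

private def ee (n : ℕ) (i : Fin n) : Mv n := ι (euclQ n) (bv n i)

lemma move_lemma (n : ℕ) (μ : Fin n) (l : List (Fin n)) :
    (l.map (ee n)).prod * ee n μ
      = ((-1:ℝ) ^ (l.filter (· ≠ μ)).length) • (ee n μ * (l.map (ee n)).prod) := by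
  induction l with
  | nil => simp
  | cons a l ih =>
    rw [List.map_cons, List.prod_cons, mul_assoc, ih, mul_smul_comm, ← mul_assoc]
    by_cases h : a = μ
    · subst h
      have hf : ((a::l).filter (· ≠ a)).length = (l.filter (· ≠ a)).length := by
        simp [List.filter_cons]
      rw [hf, mul_assoc]
    · have hac : ee n a * ee n μ = -(ee n μ * ee n a) := ι_bv_anticomm n h
      have hf : ((a::l).filter (· ≠ μ)).length = (l.filter (· ≠ μ)).length + 1 := by
        simp [List.filter_cons, h]
      rw [hac, hf, pow_succ, neg_mul, mul_assoc]
      module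

lemma rev_prod (n : ℕ) (l : List (Fin n)) :
    reverse ((l.map (ee n)).prod) = (l.reverse.map (ee n)).prod := by
  induction l with
  | nil => simp
  | cons a l ih => simp [reverse.map_mul, ih, ee]

lemma inv_prod (n : ℕ) (l : List (Fin n)) :
    involute ((l.map (ee n)).prod) = ((-1:ℝ) ^ l.length) • (l.map (ee n)).prod := by
  induction l with
  | nil => simp
  | cons a l ih =>
    simp only [List.map_cons, List.prod_cons, map_mul, ih, involute_ι, List.length_cons,
      pow_succ, ee]
    rw [mul_smul_comm, neg_mul]
    module

lemma prod_mul_revprod (n : ℕ) (l : List (Fin n)) :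
    (l.map (ee n)).prod * (l.reverse.map (ee n)).prod = 1 := by
  induction l with
  | nil => simp
  | cons a l ih =>
    rw [List.map_cons, List.prod_cons, List.reverse_cons, List.map_append, List.prod_append,
      List.map_singleton, List.prod_singleton, mul_assoc, ← mul_assoc (l.map (ee n)).prod, ih,
      one_mul]
    exact ι_bv_sq n a

lemma tau_eq (n : ℕ) : tau n = ((List.finRange n).map (ee n)).prod := by
  rw [tau, List.ofFn_eq_map]; rfl

lemma tau_mul_rev_tau (n : ℕ) : tau n * reverse (tau n) = 1 := by
  rw [tau_eq, rev_prod]; exact prod_mul_revprod n _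

lemma finRange_filter_len (n : ℕ) (μ : Fin n) :
    ((List.finRange n).filter (· ≠ μ)).length = n - 1 := by
  have hfc : (List.finRange n).filter (· ≠ μ) = (List.finRange n).filter (· != μ) :=
    List.filter_congr fun x _ => by by_cases h : x = μ <;> simp [h]
  rw [hfc, ← List.Nodup.erase_eq_filter (List.nodup_finRange n) μ,
    List.length_erase_of_mem (List.mem_finRange μ), List.length_finRange]

lemma tau_mul_e (n : ℕ) (μ : Fin n) :
    tau n * ee n μ = ((-1:ℝ) ^ (n-1)) • (ee n μ * tau n) := by
  rw [tau_eq]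
  have := move_lemma n μ (List.finRange n)
  rwa [finRange_filter_len] at this

lemma inv_tau (n : ℕ) : involute (tau n) = ((-1:ℝ) ^ n) • tau n := by
  rw [tau_eq]
  have := inv_prod n (List.finRange n)
  rwa [List.length_finRange] at this

lemma key (n : ℕ) (μ : Fin n) (A : Mv n) :
    tau n * reverse (vWedge (bv n μ) (reverse (involute A) * tau n)) = -vLCont (bv n μ) A := by
  set e := ι (euclQ n) (bv n μ) with he
  set τ := tau n with hτ
  set τ' := reverse (tau n) with hτ'
  have hττ' : ∀ x : Mv n, τ * (τ' * x) = x := fun x => by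
    rw [← mul_assoc, tau_mul_rev_tau, one_mul]
  have hτe : ∀ x : Mv n, τ * (e * x) = ((-1:ℝ) ^ (n-1)) • (e * (τ * x)) := fun x => by
    rw [← mul_assoc, show τ * e = ((-1:ℝ) ^ (n-1)) • (e * τ) from tau_mul_e n μ,
      smul_mul_assoc, mul_assoc]
  have hinvτ' : involute τ' = ((-1:ℝ) ^ n) • τ' := by
    rw [hτ', ← reverse_involute, inv_tau, map_smul]
  have hsgn : ((-1:ℝ) ^ n * (-1:ℝ) ^ (n-1)) = -1 := by
    rw [← pow_add]
    have hn : 0 < n := μ.pos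
    have h2 : n + (n - 1) = 2 * (n - 1) + 1 := by omega
    rw [h2]
    exact Odd.neg_one_pow ⟨n - 1, by ring⟩
  have h1 : reverse (vWedge (bv n μ) (reverse (involute A) * τ))
      = (2⁻¹ : ℝ) • (τ' * (involute A * e) + e * (involute τ' * A)) := by
    rw [vWedge]
    have hre : reverse e = e := reverse_ι _
    simp only [map_smul, map_add, reverse.map_mul, reverse_ι, reverse_reverse, map_mul,
      involute_involute, reverse_involute, mul_assoc, hre, ← he, ← hτ']
    rfl
  rw [h1, mul_smul_comm, mul_add, hττ', hinvτ', smul_mul_assoc]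
  simp only [mul_smul_comm, hτe, hττ', smul_smul]
  rw [hsgn, vLCont]
  module

theorem standard_hodge_coderivative {n : ℕ}
    (U : Set (EuclideanSpace ℝ (Fin n))) (hU : IsOpen U)
    (X : EuclideanSpace ℝ (Fin n) → Mv n)
    (X' : EuclideanSpace ℝ (Fin n) → EuclideanSpace ℝ (Fin n) →ₗ[ℝ] Mv n)
    (hX : IsDerivOn U X X')
    (hsmooth : ∀ ℓ : Mv n →ₗ[ℝ] ℝ, ContDiffOn ℝ (⊤ : ℕ∞) (fun y => ℓ (X y)) U)
    (δX : EuclideanSpace ℝ (Fin n) → Mv n)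
    -- δX = ⋆⁻¹ (∂_o ∧ (⋆ X̂)) :
    (hδ : ∀ x ∈ U, δX x =
      tau n * reverse (∑ μ, vWedge (bv n μ) (reverse (involute (X' x (bv n μ))) * tau n))) :
    ∀ x ∈ U, δX x = -∑ μ, vLCont (bv n μ) (X' x (bv n μ)) := by
  intro x hx
  rw [hδ x hx, map_sum, Finset.mul_sum, ← Finset.sum_neg_distrib]
  exact Finset.sum_congr rfl fun μ _ => key n μ _
end
end

section
/- Let λ_a be the Levi-Civita directional connection of a smooth metric g on open U ⊆ ℝ^n and Λ_a its extension (generalized extensor) to multivectors, Λ_a(X) = λ_a(∂_n) ∧ (n ⌟ X) := Σ_μ λ_a(b_μ) ∧ (b_μ ⌟ X). Then the contracted divergence with respect to a satisfies ∂_a ⌟ Λ_a(X) = (1/√|det g|) (∂_o √|det g|) ⌟ X for every multivector X. -/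
/- STATEMENT 16: For the Levi-Civita connection λ of a smooth metric g on open U ⊆ ℝⁿ,
with multivector extension Λ_a(X) = Σ_ν λ_a(b_ν) ∧ (b_ν ⌟ X), one has
∂_a ⌟ Λ_a(X) = (1/√|det g|) (∂_o √|det g|) ⌟ X, i.e.
Σ_μ b_μ ⌟ Λ_{b_μ}(X) = (1/√|det g|) (grad √|det g|) ⌟ X for every multivector X.
Hypotheses (from the context): λ is symmetric and Σ_μ b_μ·λ(b_μ,b) =
(b·∂_o √|det g|)/√|det g|. -/

noncomputable section
open CliffordAlgebra

def cdet {n : ℕ} (f : EuclideanSpace ℝ (Fin n) →L[ℝ] EuclideanSpace ℝ (Fin n)) : ℝ :=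
  LinearMap.det (f : EuclideanSpace ℝ (Fin n) →ₗ[ℝ] EuclideanSpace ℝ (Fin n))

variable {n : ℕ}

lemma ιswap (a b : EuclideanSpace ℝ (Fin n)) :
    ι (euclQ n) a * ι (euclQ n) b + ι (euclQ n) b * ι (euclQ n) a
      = algebraMap ℝ (Mv n) (2 * inner ℝ a b) := by
  rw [ι_mul_ι_add_swap]
  congr 1
  rw [euclQ, LinearMap.BilinMap.polar_toQuadraticMap]
  simp [real_inner_comm a b, two_mul]

lemma key1 (a b : EuclideanSpace ℝ (Fin n)) (x : Mv n) :
    vLCont b (vWedge a x) + vWedge a (vLCont b x) = (inner ℝ a b : ℝ) • x := by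
  have h2 : (inner ℝ a b : ℝ) • x = (4⁻¹:ℝ) •
      ((ι (euclQ n) a * ι (euclQ n) b + ι (euclQ n) b * ι (euclQ n) a) * x
        + x * (ι (euclQ n) a * ι (euclQ n) b + ι (euclQ n) b * ι (euclQ n) a)) := by
    rw [ιswap, ← Algebra.smul_def, ← Algebra.commutes (2 * (inner ℝ a b:ℝ)) x, ← Algebra.smul_def]
    module
  rw [h2]
  simp only [vLCont, vWedge, map_smul, map_add, map_sub, map_mul, involute_ι,
    involute_involute, smul_add, smul_sub, mul_smul_comm, smul_mul_assoc, smul_smul,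
    neg_mul, mul_neg, add_mul, mul_add, sub_mul, mul_sub, mul_assoc, neg_neg]
  module

lemma key2 (b c : EuclideanSpace ℝ (Fin n)) (x : Mv n) :
    vLCont b (vLCont c x) + vLCont c (vLCont b x) = 0 := by
  have h2 : (0 : Mv n) = (4⁻¹:ℝ) •
      ((ι (euclQ n) b * ι (euclQ n) c + ι (euclQ n) c * ι (euclQ n) b) * x
        - x * (ι (euclQ n) b * ι (euclQ n) c + ι (euclQ n) c * ι (euclQ n) b)) := by
    rw [ιswap, ← Algebra.smul_def, ← Algebra.commutes (2 * (inner ℝ b c:ℝ)) x, ← Algebra.smul_def]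
    module
  rw [h2]
  simp only [vLCont, map_smul, map_add, map_sub, map_mul, involute_ι,
    involute_involute, smul_add, smul_sub, mul_smul_comm, smul_mul_assoc, smul_smul,
    neg_mul, mul_neg, add_mul, mul_add, sub_mul, mul_sub, mul_assoc, neg_neg]
  module

lemma vLCont_sum {ι' : Type*} (a : EuclideanSpace ℝ (Fin n)) (s : Finset ι')
    (f : ι' → Mv n) : vLCont a (∑ i ∈ s, f i) = ∑ i ∈ s, vLCont a (f i) := by
  simp only [vLCont, map_sum, Finset.mul_sum, Finset.sum_mul, ← Finset.sum_sub_distrib,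
    Finset.smul_sum]

lemma vLCont_smul_left (c : ℝ) (v : EuclideanSpace ℝ (Fin n)) (X : Mv n) :
    vLCont (c • v) X = c • vLCont v X := by
  simp [vLCont, smul_sub, smul_smul, smul_mul_assoc, mul_smul_comm, mul_comm]

lemma vLCont_add_left (u v : EuclideanSpace ℝ (Fin n)) (X : Mv n) :
    vLCont (u + v) X = vLCont u X + vLCont v X := by
  simp only [vLCont, map_add, add_mul, mul_add]
  module

lemma vLCont_sum_left {ι' : Type*} (s : Finset ι') (v : ι' → EuclideanSpace ℝ (Fin n))
    (X : Mv n) : vLCont (∑ i ∈ s, v i) X = ∑ i ∈ s, vLCont (v i) X := by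
  classical
  induction s using Finset.induction with
  | empty => simp [vLCont]
  | insert _ _ h ih => simp [Finset.sum_insert h, vLCont_add_left, ih]

lemma vWedge_neg (a : EuclideanSpace ℝ (Fin n)) (x : Mv n) :
    vWedge a (-x) = - vWedge a x := by
  simp only [vWedge, mul_neg, neg_mul, map_neg]
  module


theorem contracted_divergence_of_generalized_connection {n : ℕ}
    (U : Set (EuclideanSpace ℝ (Fin n))) (hU : IsOpen U)
    (g : EuclideanSpace ℝ (Fin n) → EuclideanSpace ℝ (Fin n) →L[ℝ] EuclideanSpace ℝ (Fin n))
    (hsmooth : ContDiffOn ℝ (⊤ : ℕ∞) g U)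
    (hsym : ∀ x ∈ U, ∀ u v, (inner ℝ (g x u) v : ℝ) = inner ℝ u (g x v))
    (hdet : ∀ x ∈ U, cdet (g x) ≠ 0)
    (lam : EuclideanSpace ℝ (Fin n) → EuclideanSpace ℝ (Fin n) → EuclideanSpace ℝ (Fin n) →
      EuclideanSpace ℝ (Fin n))
    (hsymm : ∀ x ∈ U, ∀ a b, lam x a b = lam x b a)
    (hdiv : ∀ x ∈ U, ∀ b,
      ∑ μ, (inner ℝ (bv n μ) (lam x (bv n μ) b) : ℝ)
        = (Real.sqrt |cdet (g x)|)⁻¹ *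
            fderiv ℝ (fun y => Real.sqrt |cdet (g y)|) x b) :
    ∀ x ∈ U, ∀ X : Mv n,
      ∑ μ, vLCont (bv n μ) (∑ ν, vWedge (lam x (bv n μ) (bv n ν)) (vLCont (bv n ν) X))
        = (Real.sqrt |cdet (g x)|)⁻¹ •
            vLCont (∑ ν, (fderiv ℝ (fun y => Real.sqrt |cdet (g y)|) x (bv n ν)) • bv n ν)
              X := by
  intro x hx X
  set D : Fin n → ℝ := fun ν => fderiv ℝ (fun y => Real.sqrt |cdet (g y)|) x (bv n ν) with hD
  set s : ℝ := (Real.sqrt |cdet (g x)|)⁻¹ with hs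
  have hterm : ∀ μ ν, vLCont (bv n μ) (vWedge (lam x (bv n μ) (bv n ν)) (vLCont (bv n ν) X))
      = (inner ℝ (lam x (bv n μ) (bv n ν)) (bv n μ) : ℝ) • vLCont (bv n ν) X
        - vWedge (lam x (bv n μ) (bv n ν)) (vLCont (bv n μ) (vLCont (bv n ν) X)) := by
    intro μ ν
    have := key1 (lam x (bv n μ) (bv n ν)) (bv n μ) (vLCont (bv n ν) X)
    linear_combination (norm := module) this
  calc ∑ μ, vLCont (bv n μ) (∑ ν, vWedge (lam x (bv n μ) (bv n ν)) (vLCont (bv n ν) X))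
      = ∑ μ, ∑ ν, ((inner ℝ (lam x (bv n μ) (bv n ν)) (bv n μ) : ℝ) • vLCont (bv n ν) X
          - vWedge (lam x (bv n μ) (bv n ν)) (vLCont (bv n μ) (vLCont (bv n ν) X))) := by
        simp_rw [vLCont_sum]
        exact Finset.sum_congr rfl fun μ _ => Finset.sum_congr rfl fun ν _ => hterm μ ν
    _ = (∑ μ, ∑ ν, (inner ℝ (lam x (bv n μ) (bv n ν)) (bv n μ) : ℝ) • vLCont (bv n ν) X)
        - ∑ μ, ∑ ν, vWedge (lam x (bv n μ) (bv n ν)) (vLCont (bv n μ) (vLCont (bv n ν) X)) := by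
        simp [Finset.sum_sub_distrib]
    _ = ∑ μ, ∑ ν, (inner ℝ (lam x (bv n μ) (bv n ν)) (bv n μ) : ℝ) • vLCont (bv n ν) X := by
        have hanti : ∀ μ ν, vWedge (lam x (bv n ν) (bv n μ)) (vLCont (bv n ν) (vLCont (bv n μ) X))
            = - vWedge (lam x (bv n μ) (bv n ν)) (vLCont (bv n μ) (vLCont (bv n ν) X)) := by
          intro μ ν
          rw [hsymm x hx (bv n ν) (bv n μ),
            show vLCont (bv n ν) (vLCont (bv n μ) X)
              = -(vLCont (bv n μ) (vLCont (bv n ν) X)) from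
              eq_neg_of_add_eq_zero_right (key2 (bv n μ) (bv n ν) X), vWedge_neg]
        set S := ∑ μ, ∑ ν, vWedge (lam x (bv n μ) (bv n ν))
          (vLCont (bv n μ) (vLCont (bv n ν) X)) with hS
        have hSneg : S = -S := by
          calc S = ∑ ν, ∑ μ, vWedge (lam x (bv n μ) (bv n ν))
                (vLCont (bv n μ) (vLCont (bv n ν) X)) := Finset.sum_comm
            _ = ∑ ν, ∑ μ, -(vWedge (lam x (bv n ν) (bv n μ))
                (vLCont (bv n ν) (vLCont (bv n μ) X))) := by
              refine Finset.sum_congr rfl fun ν _ => Finset.sum_congr rfl fun μ _ => ?_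
              exact hanti ν μ
            _ = -S := by
              simp only [Finset.sum_neg_distrib]
              rfl
        have : S = 0 := by
          have h2 : (2:ℝ) • S = 0 := by rw [two_smul]; nth_rewrite 1 [hSneg]; abel
          simpa using (smul_eq_zero.mp h2).resolve_left (by norm_num)
        rw [this, sub_zero]
    _ = ∑ ν, (∑ μ, (inner ℝ (bv n μ) (lam x (bv n μ) (bv n ν)) : ℝ)) • vLCont (bv n ν) X := by
        rw [Finset.sum_comm]
        simp_rw [← Finset.sum_smul]
        exact Finset.sum_congr rfl fun ν _ => by
          congr 1; exact Finset.sum_congr rfl fun μ _ => real_inner_comm _ _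
    _ = ∑ ν, (s * D ν) • vLCont (bv n ν) X := by
        exact Finset.sum_congr rfl fun ν _ => by rw [hdiv x hx (bv n ν)]
    _ = s • vLCont (∑ ν, D ν • bv n ν) X := by
        rw [vLCont_sum_left, Finset.smul_sum]
        exact Finset.sum_congr rfl fun ν _ => by
          rw [vLCont_smul_left, smul_smul]
end
end
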